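/- Let n = 2 with marginals F_1 = U[1/4, 1/4 + ε] and F_2 = U[0, 1], where 0 < ε < 1/8. Then: (a) every uniform pricing p' (with p'_1 = p'_2) has robust revenue guarantee R(p') ≤ 1/4 + ε; and (b) the nonuniform pricing p = (1/4, 5/8 − ε) has robust revenue guarantee R(p) ≥ (3/8)·(5/8 − ε) + (5/8)·(1/4) = 25/64 − (3/8)ε. In particular, for sufficiently small ε > 0, no uniform pricing is max-min optimal. -/

import Mathlib

open MeasureTheory
open scoped ENNReal NNReal

noncomputable section

/-- A buyer's purchase rule for `n` items: given a valuation profile and a vector of item prices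
(in `[0,∞]`), `choose` returns the purchased item (or `none` if nothing is purchased).
The axioms say: a purchased item has a finite price and yields nonnegative utility
(`feasible`), the purchased item maximizes utility among all items (`optimal`), and the buyer
does purchase whenever some item yields nonnegative utility (`active`). Ties among
utility-maximizing items are broken according to the (fixed) rule embodied by `choose`. -/
structure BuyerRule (n : ℕ) where
  choose : (Fin n → ℝ) → (Fin n → ℝ≥0∞) → Option (Fin n)
  feasible : ∀ v p j, choose v p = some j → p j ≠ ⊤ ∧ (p j).toReal ≤ v j
  optimal : ∀ v p j k, choose v p = some j → p k ≠ ⊤ →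
      v k - (p k).toReal ≤ v j - (p j).toReal
  active : ∀ v p, (∃ k, p k ≠ ⊤ ∧ (p k).toReal ≤ v k) → (choose v p).isSome = true

/-- The seller's revenue from valuation profile `v` under pricing `p`. -/
def BuyerRule.revenue {n : ℕ} (B : BuyerRule n) (p : Fin n → ℝ≥0∞) (v : Fin n → ℝ) : ℝ≥0∞ :=
  (B.choose v p).elim 0 (fun j => p j)

/-- A joint distribution `F` on valuation profiles is compatible with the marginals `marg`
if it is a probability measure whose `j`-th one-dimensional marginal is `marg j` for every `j`. -/
def Compatible {n : ℕ} (marg : Fin n → Measure ℝ) (F : Measure (Fin n → ℝ)) : Prop :=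
  IsProbabilityMeasure F ∧ ∀ j, F.map (fun v => v j) = marg j

/-- `R(p,F)`: the expected revenue of pricing `p` under joint distribution `F`. -/
def expRev {n : ℕ} (B : BuyerRule n) (p : Fin n → ℝ≥0∞) (F : Measure (Fin n → ℝ)) : ℝ≥0∞ :=
  ∫⁻ v, B.revenue p v ∂F

/-- `R(p)`: the robust revenue guarantee of `p`, the infimum of `R(p,F)` over compatible `F`. -/
def robustRev {n : ℕ} (B : BuyerRule n) (marg : Fin n → Measure ℝ) (p : Fin n → ℝ≥0∞) : ℝ≥0∞ :=
  ⨅ (F : Measure (Fin n → ℝ)) (_ : Compatible marg F), expRev B p F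

/-- `R*`: the optimal robust revenue guarantee over all pricings. -/
def optRobust {n : ℕ} (B : BuyerRule n) (marg : Fin n → Measure ℝ) : ℝ≥0∞ :=
  ⨆ p : Fin n → ℝ≥0∞, robustRev B marg p

/-- The uniform distribution on `[a,b]`. -/
def unif (a b : ℝ) : Measure ℝ :=
  (ENNReal.ofReal (b - a))⁻¹ • volume.restrict (Set.Icc a b)

/-! Under the independent coupling, a buyer facing a uniform price `t` pays only if some value
reaches `t`; for `t > 1/4 + ε` only `v 1` can, with probability `1 - t`, so the revenue is at most
`t (1 - t) ≤ 1/4`, and for `t ≤ 1/4 + ε` it is at most `t`.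

Against `p = (1/4, 5/8 - ε)`, item `0` is affordable for every value `v 0 ∈ [1/4, 1/4 + ε]`, so
under every coupling the buyer buys and pays at least `1/4`. Its utility is at most `ε`, so once
`v 1 > 5/8` item `1` is strictly better and the buyer pays `5/8 - ε`; that event has probability
`3/8` whatever the coupling. -/

open Set

lemma unif_apply (a b : ℝ) {s : Set ℝ} (hs : MeasurableSet s) :
    unif a b s = (ENNReal.ofReal (b - a))⁻¹ * volume (s ∩ Icc a b) := by
  simp [unif, Measure.restrict_apply hs]

lemma isProbabilityMeasure_unif {a b : ℝ} (h : a < b) : IsProbabilityMeasure (unif a b) := by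
  constructor
  rw [unif_apply a b MeasurableSet.univ, univ_inter, Real.volume_Icc, ENNReal.inv_mul_cancel]
  · simpa using h
  · exact ENNReal.ofReal_ne_top

lemma unif_Ici {a b t : ℝ} (ht : a ≤ t) :
    unif a b (Ici t) = (ENNReal.ofReal (b - a))⁻¹ * ENNReal.ofReal (b - t) := by
  have hinter : Ici t ∩ Icc a b = Icc t b := by
    ext x
    simp only [mem_inter_iff, mem_Ici, mem_Icc]
    exact ⟨fun ⟨h, _, h'⟩ => ⟨h, h'⟩, fun ⟨h, h'⟩ => ⟨h, ht.trans h, h'⟩⟩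
  rw [unif_apply a b measurableSet_Ici, hinter, Real.volume_Icc]

lemma unif_Ioi {a b t : ℝ} (ht : a ≤ t) :
    unif a b (Ioi t) = (ENNReal.ofReal (b - a))⁻¹ * ENNReal.ofReal (b - t) := by
  have hinter : Ioi t ∩ Icc a b = Ioc t b := by
    ext x
    simp only [mem_inter_iff, mem_Ioi, mem_Icc, mem_Ioc]
    exact ⟨fun ⟨h, _, h'⟩ => ⟨h, h'⟩, fun ⟨h, h'⟩ => ⟨h, ht.trans h.le, h'⟩⟩
  rw [unif_apply a b measurableSet_Ioi, hinter, Real.volume_Ioc]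

lemma ae_unif_mem_Icc (a b : ℝ) : ∀ᵐ x ∂unif a b, x ∈ Icc a b :=
  Measure.ae_smul_measure (ae_restrict_mem measurableSet_Icc) _

section Coupling

variable {n : ℕ} {marg : Fin n → Measure ℝ} {F : Measure (Fin n → ℝ)}

lemma compatible_pi (marg : Fin n → Measure ℝ) [∀ j, IsProbabilityMeasure (marg j)] :
    Compatible marg (Measure.pi marg) :=
  ⟨inferInstance, fun j => (measurePreserving_eval marg j).map_eq⟩

lemma Compatible.measure_eval_preimage (hF : Compatible marg F) (j : Fin n) {s : Set ℝ}
    (hs : MeasurableSet s) : F {v | v j ∈ s} = marg j s := by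
  rw [← hF.2 j, Measure.map_apply (measurable_pi_apply j) hs]; rfl

lemma Compatible.ae_eval (hF : Compatible marg F) (j : Fin n) {P : ℝ → Prop}
    (h : ∀ᵐ x ∂marg j, P x) : ∀ᵐ v ∂F, P (v j) :=
  ae_of_ae_map (measurable_pi_apply j).aemeasurable (by rwa [hF.2 j])

lemma robustRev_le_expRev (B : BuyerRule n) (p : Fin n → ℝ≥0∞) (hF : Compatible marg F) :
    robustRev B marg p ≤ expRev B p F :=
  iInf₂_le F hF

lemma le_robustRev {B : BuyerRule n} {p : Fin n → ℝ≥0∞} {x : ℝ≥0∞}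
    (h : ∀ F, Compatible marg F → x ≤ expRev B p F) : x ≤ robustRev B marg p :=
  le_iInf₂ h

end Coupling

namespace BuyerRule

variable {n : ℕ} (B : BuyerRule n) {p : Fin n → ℝ≥0∞} {v : Fin n → ℝ}

lemma revenue_of_choose_eq_some {j : Fin n} (h : B.choose v p = some j) :
    B.revenue p v = p j := by
  simp [revenue, h]

lemma choose_eq_none_of_forall_eq_top (hp : ∀ j, p j = ⊤) : B.choose v p = none :=
  Option.eq_none_iff_forall_ne_some.2 fun j h => (B.feasible v p j h).1 (hp j)

lemma revenue_le_of_forall_le {q : ℝ≥0∞} (hp : ∀ j, p j ≤ q) : B.revenue p v ≤ q := by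
  cases h : B.choose v p with
  | none => simp [revenue, h]
  | some j => exact (B.revenue_of_choose_eq_some h).trans_le (hp j)

lemma revenue_le_indicator_of_forall_eq {t : ℝ} (ht : 0 ≤ t)
    (hp : ∀ j, p j = ENNReal.ofReal t) :
    B.revenue p v ≤
      (⋃ j, {v : Fin n → ℝ | t ≤ v j}).indicator (fun _ => ENNReal.ofReal t) v := by
  cases h : B.choose v p with
  | none => simp [revenue, h]
  | some j =>
    have hpaid : t ≤ v j := by
      simpa [hp j, ENNReal.toReal_ofReal ht] using (B.feasible v p j h).2
    rw [B.revenue_of_choose_eq_some h, hp j, indicator_of_mem (mem_iUnion.2 ⟨j, hpaid⟩)]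

lemma expRev_le_of_forall_le [IsProbabilityMeasure F] {q : ℝ≥0∞} (hp : ∀ j, p j ≤ q) :
    expRev B p F ≤ q :=
  (lintegral_mono fun _ => B.revenue_le_of_forall_le hp).trans_eq (by simp)

lemma expRev_eq_zero_of_forall_eq_top (hp : ∀ j, p j = ⊤) (F : Measure (Fin n → ℝ)) :
    expRev B p F = 0 := by
  simp [expRev, revenue, B.choose_eq_none_of_forall_eq_top hp]

lemma expRev_le_of_forall_eq {marg : Fin n → Measure ℝ} {F : Measure (Fin n → ℝ)}
    (hF : Compatible marg F) {t : ℝ} (ht : 0 ≤ t) (hp : ∀ j, p j = ENNReal.ofReal t) :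
    expRev B p F ≤ ENNReal.ofReal t * ∑ j, marg j (Ici t) :=
  calc expRev B p F
      ≤ ∫⁻ v, (⋃ j, {v : Fin n → ℝ | t ≤ v j}).indicator (fun _ => ENNReal.ofReal t) v
          ∂F :=
        lintegral_mono fun _ => B.revenue_le_indicator_of_forall_eq ht hp
    _ ≤ ENNReal.ofReal t * F (⋃ j, {v : Fin n → ℝ | t ≤ v j}) :=
        lintegral_indicator_const_le _ _
    _ ≤ ENNReal.ofReal t * ∑ j, F {v : Fin n → ℝ | t ≤ v j} := by
        gcongr; exact measure_iUnion_fintype_le F _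
    _ = ENNReal.ofReal t * ∑ j, marg j (Ici t) := by
        simp_rw [← hF.measure_eval_preimage _ measurableSet_Ici, mem_Ici]

end BuyerRule

section TwoItems

variable (B : BuyerRule 2) {p : Fin 2 → ℝ≥0∞} {a b c d : ℝ}

/-- Item `0` always yields utility in `[0, b - a]`, so it is bought or beaten; once `v 1 > d`
item `1` yields more than `d - c ≥ b - a` and beats it. -/
lemma BuyerRule.le_revenue_of_mem_Icc (ha : 0 ≤ a) (hac : a ≤ c) (hbd : b + c ≤ a + d)
    (hp0 : p 0 = ENNReal.ofReal a) (hp1 : p 1 = ENNReal.ofReal c) {v : Fin 2 → ℝ}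
    (hv : v 0 ∈ Icc a b) :
    ENNReal.ofReal a + {v : Fin 2 → ℝ | d < v 1}.indicator (fun _ => ENNReal.ofReal (c - a)) v
      ≤ B.revenue p v := by
  have hc : 0 ≤ c := ha.trans hac
  have hp0' : (p 0).toReal = a := by rw [hp0, ENNReal.toReal_ofReal ha]
  have hp1' : (p 1).toReal = c := by rw [hp1, ENNReal.toReal_ofReal hc]
  have hbuys := B.active v p ⟨0, by simp [hp0], hp0'.symm ▸ hv.1⟩
  obtain ⟨j, hj⟩ := Option.isSome_iff_exists.1 hbuys
  rw [B.revenue_of_choose_eq_some hj]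
  fin_cases j
  · have hv1 : v ∉ {v : Fin 2 → ℝ | d < v 1} := by
      have := B.optimal v p 0 1 hj (by simp [hp1])
      simp only [mem_ofPred_eq, not_lt, hp0', hp1'] at this ⊢
      linarith [hv.2]
    simp [indicator_of_notMem hv1, hp0]
  · calc ENNReal.ofReal a
          + {v : Fin 2 → ℝ | d < v 1}.indicator (fun _ => ENNReal.ofReal (c - a)) v
        ≤ ENNReal.ofReal a + ENNReal.ofReal (c - a) := by
          gcongr; exact indicator_le_self' (by simp) _
      _ = p 1 := by rw [← ENNReal.ofReal_add ha (sub_nonneg.2 hac), add_sub_cancel, hp1]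

lemma BuyerRule.le_expRev_of_ae_mem_Icc {marg : Fin 2 → Measure ℝ} {F : Measure (Fin 2 → ℝ)}
    (hF : Compatible marg F) (ha : 0 ≤ a) (hac : a ≤ c) (hbd : b + c ≤ a + d)
    (hp0 : p 0 = ENNReal.ofReal a) (hp1 : p 1 = ENNReal.ofReal c)
    (hmarg0 : ∀ᵐ x ∂marg 0, x ∈ Icc a b) :
    ENNReal.ofReal a + ENNReal.ofReal (c - a) * marg 1 (Ioi d) ≤ expRev B p F := by
  have : IsProbabilityMeasure F := hF.1
  calc ENNReal.ofReal a + ENNReal.ofReal (c - a) * marg 1 (Ioi d)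
      = ∫⁻ v, ENNReal.ofReal a
          + {v : Fin 2 → ℝ | d < v 1}.indicator (fun _ => ENNReal.ofReal (c - a)) v ∂F := by
        rw [lintegral_add_left measurable_const, lintegral_const, measure_univ, mul_one,
          lintegral_indicator_const (measurableSet_lt measurable_const (measurable_pi_apply 1)),
          ← hF.measure_eval_preimage 1 measurableSet_Ioi]
        rfl
    _ ≤ expRev B p F :=
        lintegral_mono_ae <| (hF.ae_eval 0 hmarg0).mono fun _ hv =>
          B.le_revenue_of_mem_Icc ha hac hbd hp0 hp1 hv

end TwoItems

section UniformMarginals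

variable {ε : ℝ} (B : BuyerRule 2) {marg : Fin 2 → Measure ℝ}

lemma robustRev_le_of_uniform (hε : 0 < ε) (hmarg0 : marg 0 = unif (1 / 4) (1 / 4 + ε))
    (hmarg1 : marg 1 = unif 0 1) {q : ℝ≥0∞} {p : Fin 2 → ℝ≥0∞} (hp : ∀ j, p j = q) :
    robustRev B marg p ≤ ENNReal.ofReal (1 / 4 + ε) := by
  have : ∀ j, IsProbabilityMeasure (marg j) := Fin.forall_fin_two.2
    ⟨hmarg0 ▸ isProbabilityMeasure_unif (by linarith),
      hmarg1 ▸ isProbabilityMeasure_unif one_pos⟩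
  refine (robustRev_le_expRev B p (compatible_pi marg)).trans ?_
  rcases le_or_gt q (ENNReal.ofReal (1 / 4 + ε)) with hq | hq
  · exact (B.expRev_le_of_forall_le fun j => (hp j).le).trans hq
  rcases eq_or_ne q ⊤ with rfl | hq_top
  · simp [B.expRev_eq_zero_of_forall_eq_top hp]
  set t := q.toReal
  have ht : 1 / 4 + ε < t := by
    rw [← ENNReal.ofReal_toReal hq_top] at hq
    exact ((ENNReal.ofReal_lt_ofReal_iff').1 hq).1
  have hp' : ∀ j, p j = ENNReal.ofReal t := fun j => by rw [hp j, ENNReal.ofReal_toReal hq_top]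
  calc expRev B p (Measure.pi marg)
      ≤ ENNReal.ofReal t * ∑ j, marg j (Ici t) :=
        B.expRev_le_of_forall_eq (compatible_pi marg) (by linarith) hp'
    _ = ENNReal.ofReal (t * (1 - t)) := by
        rw [Fin.sum_univ_two, hmarg0, hmarg1, unif_Ici (by linarith), unif_Ici (by linarith),
          ENNReal.ofReal_of_nonpos (by linarith : 1 / 4 + ε - t ≤ 0),
          ENNReal.ofReal_mul (by linarith)]
        simp
    _ ≤ ENNReal.ofReal (1 / 4 + ε) :=
        ENNReal.ofReal_le_ofReal (by nlinarith [sq_nonneg (t - 1 / 2)])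

lemma le_robustRev_of_prices (hε' : ε < 1 / 8) (hmarg0 : marg 0 = unif (1 / 4) (1 / 4 + ε))
    (hmarg1 : marg 1 = unif 0 1) {p : Fin 2 → ℝ≥0∞} (hp0 : p 0 = ENNReal.ofReal (1 / 4))
    (hp1 : p 1 = ENNReal.ofReal (5 / 8 - ε)) :
    ENNReal.ofReal (25 / 64 - (3 / 8) * ε) ≤ robustRev B marg p := by
  refine le_robustRev fun F hF => le_of_eq_of_le ?_ <|
    B.le_expRev_of_ae_mem_Icc (d := 5 / 8) hF (by norm_num) (by linarith) (by linarith) hp0 hp1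
      (hmarg0 ▸ ae_unif_mem_Icc _ _)
  rw [hmarg1, unif_Ioi (by norm_num), sub_zero, ENNReal.ofReal_one, inv_one, one_mul,
    ← ENNReal.ofReal_mul (by linarith), ← ENNReal.ofReal_add (by norm_num) (by nlinarith)]
  ring_nf

end UniformMarginals

/-- Two items with marginals `F_1 = U[1/4, 1/4 + ε]` and `F_2 = U[0,1]`,
`0 < ε < 1/8`. (a) Every uniform pricing `p'` (equal prices) has `R(p') ≤ 1/4 + ε`;
(b) the nonuniform pricing `p = (1/4, 5/8 − ε)` has `R(p) ≥ (3/8)(5/8 − ε) + (5/8)(1/4)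
= 25/64 − (3/8)ε`. In particular, for sufficiently small `ε` (e.g. `ε < 1/12`), no uniform
pricing is max-min optimal: every uniform pricing has `R(p') < R*`. -/
theorem uniform_pricing_not_max_min_optimal
    (ε : ℝ) (hε : 0 < ε) (hε' : ε < 1 / 8)
    (B : BuyerRule 2) (marg : Fin 2 → Measure ℝ)
    (hmarg0 : marg 0 = unif (1 / 4) (1 / 4 + ε)) (hmarg1 : marg 1 = unif 0 1)
    (p : Fin 2 → ℝ≥0∞)
    (hp0 : p 0 = ENNReal.ofReal (1 / 4)) (hp1 : p 1 = ENNReal.ofReal (5 / 8 - ε)) :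
    (∀ p' : Fin 2 → ℝ≥0∞, p' 0 = p' 1 →
        robustRev B marg p' ≤ ENNReal.ofReal (1 / 4 + ε)) ∧
    ENNReal.ofReal (25 / 64 - (3 / 8) * ε) ≤ robustRev B marg p ∧
    (ε < 1 / 12 → ∀ p' : Fin 2 → ℝ≥0∞, p' 0 = p' 1 →
        robustRev B marg p' < optRobust B marg) := by
  have uniform_le : ∀ p' : Fin 2 → ℝ≥0∞, p' 0 = p' 1 →
      robustRev B marg p' ≤ ENNReal.ofReal (1 / 4 + ε) := fun p' hp' =>
    robustRev_le_of_uniform B hε hmarg0 hmarg1 (q := p' 1) (Fin.forall_fin_two.2 ⟨hp', rfl⟩)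
  have le_p := le_robustRev_of_prices B hε' hmarg0 hmarg1 hp0 hp1
  refine ⟨uniform_le, le_p, fun hε12 p' hp' => ?_⟩
  calc robustRev B marg p' ≤ ENNReal.ofReal (1 / 4 + ε) := uniform_le p' hp'
    _ < ENNReal.ofReal (25 / 64 - (3 / 8) * ε) :=
        (ENNReal.ofReal_lt_ofReal_iff (by linarith)).2 (by linarith)
    _ ≤ robustRev B marg p := le_p
    _ ≤ optRobust B marg := le_iSup _ p
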